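/- Fix an integer g ≥ 1 and real numbers C_{−1}, C_0, …, C_g satisfying C_{−1} > 2·C_0, C_i + C_{i+2} > 2·C_{i+1} for i = 0,…,g−2, and C_{g−1} > 2·C_g. Set C_{g+1} := 0 and for (X,Y) ∈ ℝ² define m_k(X,Y) = k·X + Y + C_k for k = 0,…,g+1. Let Γ̃_C be the set of points (X,Y) ∈ ℝ² at which the minimum of the g+4 values 2Y, C_{−1}, m_0(X,Y), …, m_{g+1}(X,Y) is attained by at least two of these terms. Define Γ_2 = {(X,Y) : min(2Y, C_{−1}, min over even k of m_k) = min over odd k of m_k}, Γ_3 = {(X,Y) : min(2Y, C_{−1}, min over odd k of m_k) = min over even k of m_k}, and Γ_4 = {(X,Y) : min(2Y, C_{−1}) = min over all k = 0,…,g+1 of m_k}. Then Γ̃_C = Γ_2 ∪ Γ_3 = Γ_2 ∪ Γ_3 ∪ Γ_4. -/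

import Mathlib

/-- The term `m_k(X,Y) = k·X + Y + C_k` of the tropical spectral polynomial. -/
noncomputable def mTerm (C : ℤ → ℝ) (k : ℕ) (p : ℝ × ℝ) : ℝ :=
  (k : ℝ) * p.1 + p.2 + C (k : ℤ)

/-- The family of the `g+4` values `2Y, C_{−1}, m_0(X,Y), …, m_{g+1}(X,Y)`. -/
noncomputable def tropVals (C : ℤ → ℝ) (p : ℝ × ℝ) : ℕ → ℝ := fun n =>
  if n = 0 then 2 * p.2 else if n = 1 then C (-1) else mTerm C (n - 2) p

/-- The tropical spectral curve `Γ̃_C`: the set of points where the minimum of the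
`g+4` values `2Y, C_{−1}, m_0, …, m_{g+1}` is attained by at least two terms. -/
noncomputable def tropCurve (g : ℕ) (C : ℤ → ℝ) : Set (ℝ × ℝ) :=
  {p | ∃ j ∈ Finset.range (g + 4), ∃ k ∈ Finset.range (g + 4), j ≠ k ∧
    tropVals C p j = tropVals C p k ∧
    ∀ n ∈ Finset.range (g + 4), tropVals C p j ≤ tropVals C p n}

/-- `Γ_2 = {(X,Y) : min(2Y, C_{−1}, min_{k even} m_k) = min_{k odd} m_k}`
(with `0 ≤ k ≤ g+1`). -/
noncomputable def gammaTwo (g : ℕ) (C : ℤ → ℝ) : Set (ℝ × ℝ) :=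
  {p | min (min (2 * p.2) (C (-1)))
      (((Finset.range (g + 2)).filter (fun k => Even k)).inf'
        ⟨0, by simp⟩ (fun k => mTerm C k p)) =
    ((Finset.range (g + 2)).filter (fun k => Odd k)).inf'
      ⟨1, by simp [Nat.lt_add_of_pos_left]⟩ (fun k => mTerm C k p)}

/-- `Γ_3 = {(X,Y) : min(2Y, C_{−1}, min_{k odd} m_k) = min_{k even} m_k}`
(with `0 ≤ k ≤ g+1`). -/
noncomputable def gammaThree (g : ℕ) (C : ℤ → ℝ) : Set (ℝ × ℝ) :=
  {p | min (min (2 * p.2) (C (-1)))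
      (((Finset.range (g + 2)).filter (fun k => Odd k)).inf'
        ⟨1, by simp [Nat.lt_add_of_pos_left]⟩ (fun k => mTerm C k p)) =
    ((Finset.range (g + 2)).filter (fun k => Even k)).inf'
      ⟨0, by simp⟩ (fun k => mTerm C k p)}

/-- `Γ_4 = {(X,Y) : min(2Y, C_{−1}) = min_{0 ≤ k ≤ g+1} m_k}`. -/
noncomputable def gammaFour (g : ℕ) (C : ℤ → ℝ) : Set (ℝ × ℝ) :=
  {p | min (2 * p.2) (C (-1)) =
    (Finset.range (g + 2)).inf' ⟨0, by simp⟩ (fun k => mTerm C k p)}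

/-! The terms `m_k = kX + Y + C_k` form a strictly convex sequence in `k`: the inequalities on `C`,
with `C_{g+1} = 0`, say exactly that `k ↦ C_k` is strictly convex on `0, …, g+1`. So at most two
of them attain the minimum, and then at consecutive indices, i.e. of different parity. The terms
`2Y` and `C_{−1}` cannot both attain it, since where they agree `C_{−1} > 2C_0` puts `m_0` below
them. Hence two minimal terms always lie in different classes among `{2Y, C_{−1}}`,
`{m_k : k even}`, `{m_k : k odd}`, which is what membership in `Γ_2 ∪ Γ_3` says; `Γ_4` is the
case where the first class ties with one of the others. -/

open Finset

def StrictConvexUpTo {𝕜 : Type*} [Semiring 𝕜] [LT 𝕜] (u : ℕ → 𝕜) (N : ℕ) : Prop :=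
  ∀ l, l + 2 ≤ N → 2 * u (l + 1) < u l + u (l + 2)

namespace StrictConvexUpTo

variable {𝕜 : Type*} [Field 𝕜] [LinearOrder 𝕜] [IsStrictOrderedRing 𝕜] {u : ℕ → 𝕜} {N : ℕ}

lemma add_linear (hu : StrictConvexUpTo u N) (x y : 𝕜) :
    StrictConvexUpTo (fun k => k * x + y + u k) N := by
  intro l hl
  have := hu l hl
  push_cast
  linarith

lemma lt_of_le_succ (hu : StrictConvexUpTo u N) {a b : ℕ} (hab : a + 2 ≤ b) (hb : b ≤ N)
    (ha : u a ≤ u (a + 1)) : u a < u b := by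
  obtain ⟨d, rfl⟩ := Nat.exists_eq_add_of_le hab
  clear hab
  suffices u (a + 1 + d) < u (a + 2 + d) ∧ u a < u (a + 2 + d) from this.2
  induction d with
  | zero => have := hu a (by omega); constructor <;> linarith
  | succ d ih =>
    obtain ⟨ih₁, ih₂⟩ := ih (by omega)
    have := hu (a + 1 + d) (by omega)
    rw [show a + 1 + d + 1 = a + 2 + d by omega, show a + 1 + d + 2 = a + 2 + (d + 1) by omega]
      at this
    rw [show a + 1 + (d + 1) = a + 2 + d by omega]
    constructor <;> linarith

lemma eq_succ_of_isMinOn (hu : StrictConvexUpTo u N) {a b : ℕ} (hab : a < b) (hb : b ≤ N)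
    (heq : u a = u b) (hmin : ∀ n ≤ N, u a ≤ u n) : b = a + 1 := by
  by_contra hne
  have := hu.lt_of_le_succ (by omega) hb (hmin (a + 1) (by omega))
  exact this.ne heq

end StrictConvexUpTo

lemma min_eq_or_min_eq_of_two_eq {α : Type*} [LinearOrder α] {a e o M : α}
    (ha : M ≤ a) (he : M ≤ e) (ho : M ≤ o)
    (h : a = M ∧ e = M ∨ a = M ∧ o = M ∨ e = M ∧ o = M) : min a e = o ∨ min a o = e := by
  rcases h with ⟨rfl, rfl⟩ | ⟨rfl, rfl⟩ | ⟨rfl, rfl⟩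
  · exact Or.inr (min_eq_left ho)
  · exact Or.inl (min_eq_left he)
  · exact Or.inl (min_eq_right ha)

section TropicalCurve

variable {g : ℕ} {C : ℤ → ℝ} {p : ℝ × ℝ}

@[simp] lemma tropVals_zero : tropVals C p 0 = 2 * p.2 := rfl
@[simp] lemma tropVals_one : tropVals C p 1 = C (-1) := rfl
@[simp] lemma tropVals_add_two (k : ℕ) : tropVals C p (k + 2) = mTerm C k p := rfl

lemma le_tropVals_iff {M : ℝ} : (∀ n ∈ range (g + 4), M ≤ tropVals C p n) ↔
    M ≤ 2 * p.2 ∧ M ≤ C (-1) ∧ ∀ k ≤ g + 1, M ≤ mTerm C k p := by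
  refine ⟨fun h => ⟨h 0 (by simp), h 1 (by simp), fun k hk => h (k + 2) (by simp; omega)⟩, ?_⟩
  rintro ⟨hY, hC, hm⟩ (_ | _ | k) hn
  exacts [hY, hC, hm k (by simp at hn; omega)]

lemma strictConvexUpTo_coeff (hCg1 : C ((g : ℤ) + 1) = 0)
    (h2 : ∀ i : ℕ, (i : ℤ) ≤ (g : ℤ) - 2 → C i + C (i + 2) > 2 * C (i + 1))
    (h3 : C ((g : ℤ) - 1) > 2 * C g) : StrictConvexUpTo (fun k : ℕ => C k) (g + 1) := by
  intro l hl
  push_cast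
  rcases Nat.lt_or_ge (l + 2) (g + 1) with hlt | hge
  · exact h2 l (by omega)
  · obtain rfl : g = l + 1 := by omega
    push_cast at hCg1 h3
    rw [add_sub_cancel_right] at h3
    rw [add_assoc, one_add_one_eq_two] at hCg1
    linarith

lemma strictConvexUpTo_mTerm (hC : StrictConvexUpTo (fun k : ℕ => C k) (g + 1)) :
    StrictConvexUpTo (fun k => mTerm C k p) (g + 1) :=
  hC.add_linear p.1 p.2

lemma mTerm_zero_lt_of_two_mul_eq (h1 : 2 * C 0 < C (-1)) (h : 2 * p.2 = C (-1)) :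
    mTerm C 0 p < C (-1) := by
  simp only [mTerm, Nat.cast_zero, zero_mul, zero_add]
  linarith

/-- Both sides of `h` equal the overall minimum, attained once in `S` and once outside `S`. -/
lemma mem_tropCurve_of_min_eq_inf' {S T : Finset ℕ} (hS : S.Nonempty) (hT : T.Nonempty)
    (hST : S ∪ T = range (g + 2)) (hdisj : Disjoint S T)
    (h : min (min (2 * p.2) (C (-1))) (T.inf' hT (mTerm C · p)) = S.inf' hS (mTerm C · p)) :
    p ∈ tropCurve g C := by
  have hmem : ∀ k, k ∈ S ∨ k ∈ T ↔ k ≤ g + 1 := fun k => by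
    rw [← mem_union, hST, mem_range]; omega
  set M := S.inf' hS (mTerm C · p)
  obtain ⟨s, hs, hsM⟩ := exists_mem_eq_inf' hS (mTerm C · p)
  have hlow : ∀ n ∈ range (g + 4), M ≤ tropVals C p n := by
    refine le_tropVals_iff.2 ⟨h ▸ (min_le_left _ _).trans (min_le_left _ _),
      h ▸ (min_le_left _ _).trans (min_le_right _ _), fun k hk => ?_⟩
    rcases (hmem k).2 hk with hkS | hkT
    · exact inf'_le _ hkS
    · exact h ▸ (min_le_right _ _).trans (inf'_le _ hkT)
  have hs₂ : s + 2 ∈ range (g + 4) := mem_range.2 (by have := (hmem s).1 (.inl hs); omega)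
  suffices ∃ j ∈ range (g + 4), j ≠ s + 2 ∧ tropVals C p j = M from
    let ⟨j, hj, hjs, hjM⟩ := this
    ⟨j, hj, s + 2, hs₂, hjs, hjM.trans hsM, hjM ▸ hlow⟩
  rcases min_choice (min (2 * p.2) (C (-1))) (T.inf' hT (mTerm C · p)) with hmin | hmin
  · rcases min_choice (2 * p.2) (C (-1)) with hYC | hYC
    · exact ⟨0, by simp, by omega, by rw [tropVals_zero, ← hYC, ← hmin, h]⟩
    · exact ⟨1, by simp, by omega, by rw [tropVals_one, ← hYC, ← hmin, h]⟩
  · obtain ⟨t, ht, htM⟩ := exists_mem_eq_inf' hT (mTerm C · p)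
    refine ⟨t + 2, mem_range.2 (by have := (hmem t).1 (.inr ht); omega), ?_, ?_⟩
    · exact fun hts => disjoint_left.1 hdisj hs (by rwa [← Nat.add_right_cancel hts])
    · rw [tropVals_add_two, ← htM, ← hmin, h]

lemma filter_odd_union_filter_even (n : ℕ) :
    (range n).filter Odd ∪ (range n).filter Even = range n := by
  rw [filter_union_right]
  exact filter_true_of_mem fun k _ => (Nat.even_or_odd k).symm

lemma disjoint_filter_odd_filter_even (s : Finset ℕ) : Disjoint (s.filter Odd) (s.filter Even) :=
  disjoint_filter.2 fun _ _ ho he => Nat.not_even_iff_odd.2 ho he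

lemma gammaTwo_subset_tropCurve : gammaTwo g C ⊆ tropCurve g C := fun _ hp =>
  mem_tropCurve_of_min_eq_inf' _ _ (filter_odd_union_filter_even _)
    (disjoint_filter_odd_filter_even _) hp

lemma gammaThree_subset_tropCurve : gammaThree g C ⊆ tropCurve g C := fun _ hp =>
  mem_tropCurve_of_min_eq_inf' _ _ (by rw [union_comm, filter_odd_union_filter_even])
    (disjoint_filter_odd_filter_even _).symm hp

noncomputable def evenMin (g : ℕ) (C : ℤ → ℝ) (p : ℝ × ℝ) : ℝ :=
  ((range (g + 2)).filter Even).inf' ⟨0, by simp⟩ (mTerm C · p)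

noncomputable def oddMin (g : ℕ) (C : ℤ → ℝ) (p : ℝ × ℝ) : ℝ :=
  ((range (g + 2)).filter Odd).inf' ⟨1, by simp⟩ (mTerm C · p)

lemma mem_filter_range_of_le {P : ℕ → Prop} [DecidablePred P] {k : ℕ} (hk : k ≤ g + 1)
    (hP : P k) : k ∈ (range (g + 2)).filter P :=
  mem_filter.2 ⟨mem_range.2 (by omega), hP⟩

lemma le_evenMin {M : ℝ} (hm : ∀ k ≤ g + 1, M ≤ mTerm C k p) : M ≤ evenMin g C p :=
  le_inf' _ _ fun k hk => hm k (by have := mem_range.1 (mem_filter.1 hk).1; omega)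

lemma le_oddMin {M : ℝ} (hm : ∀ k ≤ g + 1, M ≤ mTerm C k p) : M ≤ oddMin g C p :=
  le_inf' _ _ fun k hk => hm k (by have := mem_range.1 (mem_filter.1 hk).1; omega)

lemma evenMin_eq {M : ℝ} (hm : ∀ k ≤ g + 1, M ≤ mTerm C k p) {k : ℕ} (hk : k ≤ g + 1)
    (he : Even k) (hkM : mTerm C k p = M) :
    evenMin g C p = M :=
  le_antisymm (hkM ▸ inf'_le _ (mem_filter_range_of_le hk he)) (le_evenMin hm)

lemma oddMin_eq {M : ℝ} (hm : ∀ k ≤ g + 1, M ≤ mTerm C k p) {k : ℕ} (hk : k ≤ g + 1)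
    (ho : Odd k) (hkM : mTerm C k p = M) :
    oddMin g C p = M :=
  le_antisymm (hkM ▸ inf'_le _ (mem_filter_range_of_le hk ho)) (le_oddMin hm)

lemma two_classes_eq_of_minimizers (hconv : StrictConvexUpTo (fun k : ℕ => C k) (g + 1))
    (h1 : 2 * C 0 < C (-1)) {M : ℝ} (hlow : ∀ n ∈ range (g + 4), M ≤ tropVals C p n)
    {j k : ℕ} (hjk : j < k) (hk : k < g + 4) (hjM : tropVals C p j = M)
    (hkM : tropVals C p k = M) :
    min (2 * p.2) (C (-1)) = M ∧ evenMin g C p = M ∨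
      min (2 * p.2) (C (-1)) = M ∧ oddMin g C p = M ∨ evenMin g C p = M ∧ oddMin g C p = M := by
  obtain ⟨hY, hC, hm⟩ := le_tropVals_iff.1 hlow
  rcases Nat.lt_or_ge k 2 with hk2 | hk2
  · obtain ⟨rfl, rfl⟩ : j = 0 ∧ k = 1 := by omega
    have := mTerm_zero_lt_of_two_mul_eq h1 (hjM.trans hkM.symm)
    rw [tropVals_one] at hkM
    linarith [hm 0 (by omega)]
  obtain ⟨m', rfl⟩ := Nat.exists_eq_add_of_le' hk2
  rw [tropVals_add_two] at hkM
  rcases Nat.lt_or_ge j 2 with hj2 | hj2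
  · have ha : min (2 * p.2) (C (-1)) = M := by
      refine le_antisymm ?_ (le_min hY hC)
      interval_cases j
      exacts [(min_le_left _ _).trans hjM.le, (min_le_right _ _).trans hjM.le]
    rcases Nat.even_or_odd m' with he | ho
    · exact .inl ⟨ha, evenMin_eq hm (by omega) he hkM⟩
    · exact .inr (.inl ⟨ha, oddMin_eq hm (by omega) ho hkM⟩)
  · obtain ⟨m, rfl⟩ := Nat.exists_eq_add_of_le' hj2
    rw [tropVals_add_two] at hjM
    obtain rfl : m' = m + 1 := (strictConvexUpTo_mTerm hconv).eq_succ_of_isMinOn (by omega)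
      (by omega) (hjM.trans hkM.symm) fun n hn => hjM ▸ hm n hn
    refine .inr (.inr ?_)
    rcases Nat.even_or_odd m with he | ho
    · exact ⟨evenMin_eq hm (by omega) he hjM, oddMin_eq hm (by omega) he.add_one hkM⟩
    · exact ⟨evenMin_eq hm (by omega) ho.add_one hkM, oddMin_eq hm (by omega) ho hjM⟩

lemma tropCurve_subset_gammaTwo_union_gammaThree
    (hconv : StrictConvexUpTo (fun k : ℕ => C k) (g + 1)) (h1 : 2 * C 0 < C (-1)) :
    tropCurve g C ⊆ gammaTwo g C ∪ gammaThree g C := by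
  rintro p ⟨j, hj, k, hk, hjk, hjk_eq, hlow⟩
  obtain ⟨hY, hC, hm⟩ := le_tropVals_iff.1 hlow
  refine min_eq_or_min_eq_of_two_eq (le_min hY hC) (le_evenMin hm) (le_oddMin hm) ?_
  rcases hjk.lt_or_gt with hlt | hlt
  · exact two_classes_eq_of_minimizers hconv h1 hlow hlt (mem_range.1 hk) rfl hjk_eq.symm
  · exact two_classes_eq_of_minimizers hconv h1 hlow hlt (mem_range.1 hj) hjk_eq.symm rfl

lemma gammaFour_subset_gammaTwo_union_gammaThree :
    gammaFour g C ⊆ gammaTwo g C ∪ gammaThree g C := by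
  intro p (hp : min (2 * p.2) (C (-1)) = (range (g + 2)).inf' _ (mTerm C · p))
  have hm : ∀ k ≤ g + 1, min (2 * p.2) (C (-1)) ≤ mTerm C k p := fun k hk =>
    hp ▸ inf'_le _ (mem_range.2 (by omega))
  obtain ⟨k, hk, hkM⟩ := exists_mem_eq_inf' (s := range (g + 2)) ⟨0, by simp⟩ (mTerm C · p)
  have hk' : k ≤ g + 1 := by have := mem_range.1 hk; omega
  refine min_eq_or_min_eq_of_two_eq le_rfl (le_evenMin hm) (le_oddMin hm) ?_
  rcases Nat.even_or_odd k with he | ho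
  · exact .inl ⟨rfl, evenMin_eq hm hk' he (hp.trans hkM).symm⟩
  · exact .inr (.inl ⟨rfl, oddMin_eq hm hk' ho (hp.trans hkM).symm⟩)

end TropicalCurve

theorem tropCurve_decomposition (g : ℕ) (C : ℤ → ℝ)
    (hCg1 : C ((g : ℤ) + 1) = 0)
    (h1 : C (-1) > 2 * C 0)
    (h2 : ∀ i : ℕ, (i : ℤ) ≤ (g : ℤ) - 2 → C i + C (i + 2) > 2 * C (i + 1))
    (h3 : C ((g : ℤ) - 1) > 2 * C g) :
    tropCurve g C = gammaTwo g C ∪ gammaThree g C ∧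
    tropCurve g C = gammaTwo g C ∪ gammaThree g C ∪ gammaFour g C := by
  have hcurve : tropCurve g C = gammaTwo g C ∪ gammaThree g C :=
    (tropCurve_subset_gammaTwo_union_gammaThree (strictConvexUpTo_coeff hCg1 h2 h3) h1).antisymm
      (Set.union_subset gammaTwo_subset_tropCurve gammaThree_subset_tropCurve)
  exact ⟨hcurve, hcurve.trans (Set.union_eq_left.2 gammaFour_subset_gammaTwo_union_gammaThree).symm⟩
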